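/- There exists K₁ > 0 such that: for all ξ ≥ 0, |φ(ξ) − ξ/m*| ≤ K₁ sech(γ₁ξ) and |φ′(ξ) − 1/m*| ≤ K₁ sech(γ₁ξ); for all ξ ≤ 0, |φ(ξ)| ≤ K₁ sech(γ₁ξ) and |φ′(ξ)| ≤ K₁ sech(γ₁ξ); and for all ξ ∈ ℝ, |φ″(ξ)| ≤ K₁ sech(γ₁ξ) and |φ‴(ξ)| ≤ K₁ sech(γ₁ξ). -/

import Mathlib

/-!
With `r = γ₁ξ` and `a = 1/(m*γ₁)`, so that `aγ₁ = 1/m*`, we have `φ(ξ) = a · softplus r`, and the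
`k`-th derivative of `φ` is `aγ₁ᵏ` times the `(k-1)`-th derivative of the sigmoid `σ` at `r`.
All six bounds then follow from `e^{-|r|} ≤ sech r`: for `r ≥ 0` use
`softplus r - r = softplus (-r) ≤ e^{-r}` and `1 - σ r = σ (-r) ≤ e^{-r}`; for `r ≤ 0` use
`softplus r ≤ eʳ` and `σ r ≤ eʳ`; for all `r`, `σ' = σ (1 - σ) ≤ min (σ, 1 - σ) ≤ e^{-|r|}` and
`σ'' = σ' (1 - 2σ)` with `|1 - 2σ| ≤ 1`.
-/

set_option linter.unusedVariables false

noncomputable section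

open Real Filter Topology Set

/-- Partial derivative in the first spatial variable. -/
def d1 (f : ℝ → ℝ → ℝ) (x y : ℝ) : ℝ := deriv (fun s => f s y) x

/-- Partial derivative in the second spatial variable. -/
def d2 (f : ℝ → ℝ → ℝ) (x y : ℝ) : ℝ := deriv (fun s => f x s) y

/-- Laplacian of a function of two real variables. -/
def lap (f : ℝ → ℝ → ℝ) (x y : ℝ) : ℝ := d1 (d1 f) x y + d2 (d2 f) x y

/-- The `i`-th component of `u` at time `t`, as a function of the two spatial variables. -/
def slc {m : ℕ} (u : ℝ → ℝ → ℝ → Fin m → ℝ) (i : Fin m) (t : ℝ) : ℝ → ℝ → ℝ :=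
  fun x y => u t x y i

/-- Time derivative of the `i`-th component of `u`. -/
def dt {m : ℕ} (u : ℝ → ℝ → ℝ → Fin m → ℝ) (i : Fin m) (t x y : ℝ) : ℝ :=
  deriv (fun τ => u τ x y i) t

/-- Hyperbolic secant. -/
def sech (r : ℝ) : ℝ := 2 / (Real.exp r + Real.exp (-r))

def softplus (x : ℝ) : ℝ := log (1 + exp x)

lemma softplus_nonneg (x : ℝ) : 0 ≤ softplus x :=
  log_nonneg (by linarith [exp_pos x])

lemma softplus_le_exp (x : ℝ) : softplus x ≤ exp x := by
  rw [softplus]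
  linarith [log_le_sub_one_of_pos (show 0 < 1 + exp x by positivity)]

lemma softplus_sub_self (x : ℝ) : softplus x - x = softplus (-x) := by
  have h : 1 + exp x = exp x * (1 + exp (-x)) := by
    rw [mul_add, ← exp_add, add_neg_cancel, exp_zero]; ring
  rw [softplus, h, log_mul (exp_ne_zero x) (by positivity), log_exp, add_sub_cancel_left]
  rfl

lemma abs_softplus_le_of_nonpos {x : ℝ} (hx : x ≤ 0) : |softplus x| ≤ exp (-|x|) := by
  rw [abs_of_nonneg (softplus_nonneg x), abs_of_nonpos hx, neg_neg]
  exact softplus_le_exp x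

lemma hasDerivAt_softplus (x : ℝ) : HasDerivAt softplus (sigmoid x) x :=
  (((hasDerivAt_exp x).const_add 1).log (by positivity)).congr_deriv <| by
    rw [sigmoid_def, exp_neg]; field_simp; ring

lemma deriv_softplus : deriv softplus = sigmoid :=
  funext fun x => (hasDerivAt_softplus x).deriv

lemma deriv_sigmoid_mul_one_sub_sigmoid :
    deriv (fun x => sigmoid x * (1 - sigmoid x)) =
      fun x => sigmoid x * (1 - sigmoid x) * (1 - 2 * sigmoid x) := by
  funext x
  have h := hasDerivAt_sigmoid x
  exact (h.mul (h.const_sub 1)).deriv.trans (by ring)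

lemma sigmoid_le_exp (x : ℝ) : sigmoid x ≤ exp x := by
  rw [← div_le_one (exp_pos x), div_eq_mul_inv, ← exp_neg, sigmoid_mul_rexp_neg]
  exact sigmoid_le_one _

lemma abs_sigmoid_le_of_nonpos {x : ℝ} (hx : x ≤ 0) : |sigmoid x| ≤ exp (-|x|) := by
  rw [abs_of_nonneg (sigmoid_nonneg x), abs_of_nonpos hx, neg_neg]
  exact sigmoid_le_exp x

lemma abs_sigmoid_mul_one_sub_sigmoid_le (x : ℝ) :
    |sigmoid x * (1 - sigmoid x)| ≤ exp (-|x|) := by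
  rw [abs_of_nonneg (mul_nonneg (sigmoid_nonneg x) (by linarith [sigmoid_le_one x]))]
  rcases le_total 0 x with hx | hx
  · rw [abs_of_nonneg hx, ← sigmoid_neg, ← one_mul (exp (-x))]
    exact mul_le_mul (sigmoid_le_one x) (sigmoid_le_exp (-x)) (sigmoid_nonneg _) zero_le_one
  · rw [abs_of_nonpos hx, neg_neg, ← mul_one (exp x)]
    exact mul_le_mul (sigmoid_le_exp x) (by linarith [sigmoid_nonneg x])
      (by linarith [sigmoid_le_one x]) (exp_pos x).le

lemma abs_sigmoid_mul_one_sub_sigmoid_mul_le (x : ℝ) :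
    |sigmoid x * (1 - sigmoid x) * (1 - 2 * sigmoid x)| ≤ exp (-|x|) := by
  have h : |1 - 2 * sigmoid x| ≤ 1 :=
    abs_le.2 ⟨by linarith [sigmoid_le_one x], by linarith [sigmoid_nonneg x]⟩
  rw [abs_mul, ← mul_one (exp (-|x|))]
  exact mul_le_mul (abs_sigmoid_mul_one_sub_sigmoid_le x) h (abs_nonneg _) (exp_pos _).le

lemma exp_neg_abs_le_sech (r : ℝ) : exp (-|r|) ≤ sech r := by
  have h : exp r + exp (-r) ≤ 2 * exp |r| := by
    linarith [exp_le_exp.2 (le_abs_self r), exp_le_exp.2 (neg_le_abs r)]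
  calc exp (-|r|) = 2 / (2 * exp |r|) := by rw [exp_neg]; field_simp
    _ ≤ sech r := div_le_div_of_nonneg_left zero_le_two (by positivity) h

lemma abs_mul_le_mul_sech {C K y r : ℝ} (hC : 0 ≤ C) (hCK : C ≤ K)
    (hy : |y| ≤ exp (-|r|)) : |C * y| ≤ K * sech r := by
  rw [abs_mul, abs_of_nonneg hC]
  exact mul_le_mul hCK (hy.trans (exp_neg_abs_le_sech r)) (abs_nonneg y) (hC.trans hCK)

lemma deriv_const_mul_comp_mul (a γ : ℝ) (f : ℝ → ℝ) :
    deriv (fun ξ => a * f (γ * ξ)) = fun ξ => a * γ * deriv f (γ * ξ) := by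
  rw [deriv_const_mul_field']
  funext ξ
  rw [deriv_comp_mul_left, smul_eq_mul, mul_assoc]

theorem stmt10
    (c s : ℝ) (hc : 0 < c) (hsc : c < s)
    (mstar : ℝ) (hmstar : mstar = Real.sqrt (s ^ 2 - c ^ 2) / c)
    (γ₁ : ℝ) (hγ₁ : γ₁ = s * mstar)
    (φc : ℝ → ℝ) (hφc : ∀ ξ : ℝ, φc ξ = 1 / (mstar * γ₁) * Real.log (1 + Real.exp (γ₁ * ξ)))
    :
    ∃ K₁ > (0:ℝ),
      (∀ ξ : ℝ, 0 ≤ ξ → |φc ξ - ξ / mstar| ≤ K₁ * sech (γ₁ * ξ) ∧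
        |deriv φc ξ - 1 / mstar| ≤ K₁ * sech (γ₁ * ξ)) ∧
      (∀ ξ : ℝ, ξ ≤ 0 → |φc ξ| ≤ K₁ * sech (γ₁ * ξ) ∧ |deriv φc ξ| ≤ K₁ * sech (γ₁ * ξ)) ∧
      (∀ ξ : ℝ, |deriv (deriv φc) ξ| ≤ K₁ * sech (γ₁ * ξ) ∧
        |deriv (deriv (deriv φc)) ξ| ≤ K₁ * sech (γ₁ * ξ)) := by
  have hm : 0 < mstar := hmstar ▸ div_pos (sqrt_pos.2 (by nlinarith)) hc
  have hγ : 0 < γ₁ := hγ₁ ▸ mul_pos (hc.trans hsc) hm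
  set a := 1 / (mstar * γ₁)
  have haγ : a * γ₁ = 1 / mstar := by simp only [a]; field_simp
  have hφ : φc = fun ξ => a * softplus (γ₁ * ξ) := funext hφc
  have hD1 : deriv φc = fun ξ => a * γ₁ * sigmoid (γ₁ * ξ) := by
    rw [hφ, deriv_const_mul_comp_mul, deriv_softplus]
  have hD2 : deriv (deriv φc) =
      fun ξ => a * γ₁ * γ₁ * (sigmoid (γ₁ * ξ) * (1 - sigmoid (γ₁ * ξ))) := by
    rw [hD1, deriv_const_mul_comp_mul, deriv_sigmoid]
  have hD3 : deriv (deriv (deriv φc)) = fun ξ => a * γ₁ * γ₁ * γ₁ *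
      (sigmoid (γ₁ * ξ) * (1 - sigmoid (γ₁ * ξ)) * (1 - 2 * sigmoid (γ₁ * ξ))) := by
    rw [hD2]
    exact (deriv_const_mul_comp_mul _ _ fun x => sigmoid x * (1 - sigmoid x)).trans <| by
      rw [deriv_sigmoid_mul_one_sub_sigmoid]
  have h₀ : 0 < a := by positivity
  have h₁ : 0 < a * γ₁ := by positivity
  have h₂ : 0 < a * γ₁ * γ₁ := by positivity
  have h₃ : 0 < a * γ₁ * γ₁ * γ₁ := by positivity
  refine ⟨a + a * γ₁ + a * γ₁ * γ₁ + a * γ₁ * γ₁ * γ₁, by positivity,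
    fun ξ hξ => ⟨?_, ?_⟩, fun ξ hξ => ⟨?_, ?_⟩, fun ξ => ⟨?_, ?_⟩⟩
  · rw [show φc ξ - ξ / mstar = a * softplus (-(γ₁ * ξ)) by
      rw [hφ, ← softplus_sub_self, div_eq_mul_one_div, ← haγ]; ring]
    refine abs_mul_le_mul_sech h₀.le (by linarith) ?_
    rw [← abs_neg (γ₁ * ξ)]
    exact abs_softplus_le_of_nonpos (by nlinarith)
  · rw [show deriv φc ξ - 1 / mstar = -(a * γ₁ * sigmoid (-(γ₁ * ξ))) by
      rw [hD1, sigmoid_neg, ← haγ]; ring, abs_neg]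
    refine abs_mul_le_mul_sech h₁.le (by linarith) ?_
    rw [← abs_neg (γ₁ * ξ)]
    exact abs_sigmoid_le_of_nonpos (by nlinarith)
  · rw [hφ]
    exact abs_mul_le_mul_sech h₀.le (by linarith) (abs_softplus_le_of_nonpos (by nlinarith))
  · rw [hD1]
    exact abs_mul_le_mul_sech h₁.le (by linarith) (abs_sigmoid_le_of_nonpos (by nlinarith))
  · rw [hD2]
    exact abs_mul_le_mul_sech h₂.le (by linarith) (abs_sigmoid_mul_one_sub_sigmoid_le _)
  · rw [hD3]
    exact abs_mul_le_mul_sech h₃.le (by linarith) (abs_sigmoid_mul_one_sub_sigmoid_mul_le _)
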